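/- Let k be a positive integer, p prime, and F ⊆ 2^[n] a k-wise p-divisible family whose F_p-span V satisfies V^⟨k⟩ = C₁ ⊕ C₂ where C₁, C₂ have disjoint non-zero supports S₁, S₂ with S₁ ∪ S₂ = [n]. Then the restricted families F₁ = {A ∩ S₁ : A ∈ F} and F₂ = {A ∩ S₂ : A ∈ F} are each k-wise p-divisible, and |F| ≤ |F₁|·|F₂|. -/

import Mathlib

open Submodule

/-- The (Schur / coordinatewise) product of two subspaces of `Fin n → K`. -/
def schurMul {K : Type*} [CommRing K] {n : ℕ} (C D : Submodule K (Fin n → K)) :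
    Submodule K (Fin n → K) :=
  Submodule.span K {x | ∃ c ∈ C, ∃ d ∈ D, x = c * d}

/-- `schurPow C k` is the `(k+1)`-st Schur power `C^⟨k+1⟩`; so `schurPow C 0 = C^⟨1⟩ = C`. -/
def schurPow {K : Type*} [CommRing K] {n : ℕ} (C : Submodule K (Fin n → K)) :
    ℕ → Submodule K (Fin n → K)
  | 0 => C
  | k + 1 => schurMul (schurPow C k) C

/-- The stabiliser `St(E) = {x : x * E ⊆ E}` of a subspace, itself a subspace. -/
def stab {K : Type*} [CommRing K] {n : ℕ} (E : Submodule K (Fin n → K)) :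
    Submodule K (Fin n → K) where
  carrier := {x | ∀ e ∈ E, x * e ∈ E}
  add_mem' := fun {a b} ha hb e he => by simpa [add_mul] using E.add_mem (ha e he) (hb e he)
  zero_mem' := fun e he => by simp
  smul_mem' := fun c {x} hx e he => by simpa [smul_mul_assoc] using E.smul_mem c (hx e he)

/-- Support of a subspace of `Fin n → K`. -/
def suppS {K : Type*} [CommRing K] {n : ℕ} (C : Submodule K (Fin n → K)) : Set (Fin n) :=
  {i | ∃ v ∈ C, v i ≠ 0}

/-- Characteristic vector of a finite set. -/
def charVec (R : Type*) [Zero R] [One R] {n : ℕ} (A : Finset (Fin n)) : Fin n → R :=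
  fun i => if i ∈ A then 1 else 0

/-- `𝓕` is `k`-wise `ℓ`-divisible: every intersection of `k` (not necessarily distinct)
members of `𝓕` has cardinality divisible by `ℓ`. -/
def kWiseDiv (n k ℓ : ℕ) (𝓕 : Finset (Finset (Fin n))) : Prop :=
  ∀ A : Fin k → Finset (Fin n), (∀ i, A i ∈ 𝓕) → ℓ ∣ (Finset.univ.inf A).card

/-- Support of a set family. -/
def famSupp {n : ℕ} (ℱ : Set (Finset (Fin n))) : Set (Fin n) :=
  ⋃ B ∈ ℱ, (B : Set (Fin n))

/-- `A` is an atom of the family `ℱ`: a nonempty subset of the support such that every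
member of `ℱ` contains `A` or is disjoint from it, maximal with this property. -/
def IsAtomOf {n : ℕ} (ℱ : Set (Finset (Fin n))) (A : Finset (Fin n)) : Prop :=
  A.Nonempty ∧ (A : Set (Fin n)) ⊆ famSupp ℱ ∧ (∀ B ∈ ℱ, A ⊆ B ∨ Disjoint A B) ∧
    ∀ A' : Finset (Fin n), A ⊆ A' → (A' : Set (Fin n)) ⊆ famSupp ℱ →
      (∀ B ∈ ℱ, A' ⊆ B ∨ Disjoint A' B) → A' = A

/-- The family `ℱ^r` of all `r`-fold intersections of members of `ℱ`. -/
def interFam {n : ℕ} (ℱ : Set (Finset (Fin n))) (r : ℕ) : Set (Finset (Fin n)) :=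
  {S | ∃ f : Fin r → Finset (Fin n), (∀ i, f i ∈ ℱ) ∧ S = Finset.univ.inf f}

/-- The linear map sending `v` to its restriction (indicator) on a coordinate set `S`. -/
noncomputable def indicatorMapL {K : Type*} [CommRing K] {n : ℕ} (S : Set (Fin n)) :
    (Fin n → K) →ₗ[K] (Fin n → K) where
  toFun v := S.indicator v
  map_add' a b := by
    funext i; by_cases h : i ∈ S <;> simp [Set.indicator_apply, h]
  map_smul' c a := by
    funext i; by_cases h : i ∈ S <;> simp [Set.indicator_apply, h]

/-- Restriction (projection) of a subspace `V` to the coordinates in `S`. -/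
noncomputable def restrTo {K : Type*} [CommRing K] {n : ℕ} (S : Set (Fin n))
    (V : Submodule K (Fin n → K)) : Submodule K (Fin n → K) :=
  V.map (indicatorMapL S)

/-!
The characteristic vectors of the `k`-fold intersections of members of `𝓕` span `V^⟨k⟩`, and
`𝓕` is `k`-wise `p`-divisible exactly when the coordinate-sum functional vanishes on this span.
Restricting to `S₁` maps the generators of `V^⟨k⟩` to those of the `k`-th Schur power of the span
of `𝓕₁`, and it maps `V^⟨k⟩ = C₁ ⊕ C₂` into `C₁ ≤ V^⟨k⟩`, on which the functional vanishes.
The bound `|𝓕| ≤ |𝓕₁|·|𝓕₂|` holds because `A ↦ (A ∩ S₁, A ∩ S₂)` is injective when `S₁ ∪ S₂ = [n]`.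
-/

open scoped Pointwise

variable {K : Type*} [CommRing K] {n : ℕ}

lemma schurMul_eq_mul (C D : Submodule K (Fin n → K)) : schurMul C D = C * D := by
  rw [Submodule.mul_eq_span_mul_set, schurMul]
  congr 1
  ext x
  simp only [Set.mem_mul, Set.mem_ofPred_eq, SetLike.mem_coe, eq_comm]

lemma charVec_mul {R : Type*} [MulZeroOneClass R] (A B : Finset (Fin n)) :
    charVec R A * charVec R B = charVec R (A ∩ B) := by
  funext i
  by_cases hA : i ∈ A <;> by_cases hB : i ∈ B <;> simp [charVec, hA, hB]

lemma sum_charVec {R : Type*} [AddCommMonoidWithOne R] (A : Finset (Fin n)) :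
    ∑ i, charVec R A i = A.card := by
  simp [charVec]

lemma indicatorMapL_charVec (S A : Finset (Fin n)) :
    indicatorMapL (S : Set (Fin n)) (charVec K A) = charVec K (A ∩ S) := by
  funext i
  by_cases hA : i ∈ A <;> by_cases hS : i ∈ S <;>
    simp [indicatorMapL, charVec, hA, hS]

lemma univ_inf_cons {m : ℕ} (A : Finset (Fin n)) (f : Fin m → Finset (Fin n)) :
    Finset.univ.inf (Fin.cons A f : Fin (m + 1) → Finset (Fin n)) = A ∩ Finset.univ.inf f := by
  ext x
  simp [Finset.mem_inf, Fin.forall_fin_succ]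

lemma interFam_one (ℱ : Set (Finset (Fin n))) : interFam ℱ 1 = ℱ := by
  ext S
  refine ⟨?_, fun hS => ⟨fun _ => S, fun _ => hS, by simp⟩⟩
  rintro ⟨f, hf, rfl⟩
  simpa using hf 0

lemma interFam_succ (ℱ : Set (Finset (Fin n))) (r : ℕ) :
    interFam ℱ (r + 1) = Set.image2 (· ∩ ·) ℱ (interFam ℱ r) := by
  ext S
  constructor
  · rintro ⟨f, hf, rfl⟩
    refine ⟨f 0, hf 0, _, ⟨Fin.tail f, fun i => hf i.succ, rfl⟩, ?_⟩
    simpa only [Fin.cons_self_tail] using (univ_inf_cons (f 0) (Fin.tail f)).symm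
  · rintro ⟨A, hA, _, ⟨f, hf, rfl⟩, rfl⟩
    exact ⟨Fin.cons A f, Fin.cases hA hf, (univ_inf_cons A f).symm⟩

lemma schurPow_span_charVec (ℱ : Set (Finset (Fin n))) (j : ℕ) :
    schurPow (Submodule.span K (charVec K '' ℱ)) j =
      Submodule.span K (charVec K '' interFam ℱ (j + 1)) := by
  induction j with
  | zero => rw [interFam_one]; rfl
  | succ j ih =>
    rw [schurPow, schurMul_eq_mul, ih, Submodule.mul_comm, Submodule.span_mul_span,
      interFam_succ (r := j + 1), Set.image_image2_distrib fun A B => (charVec_mul A B).symm,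
      Set.image2_mul]

lemma interFam_image_inter (𝓕 : Finset (Finset (Fin n))) (S : Finset (Fin n)) (r : ℕ) :
    interFam ↑(𝓕.image (· ∩ S)) (r + 1) = (· ∩ S) '' interFam ↑𝓕 (r + 1) := by
  have inf_inter : ∀ A : Fin (r + 1) → Finset (Fin n),
      Finset.univ.inf (fun i => A i ∩ S) = Finset.univ.inf A ∩ S := fun A => by
    ext x
    simp only [Finset.mem_inf, Finset.mem_univ, forall_const, Finset.mem_inter]
    exact ⟨fun h => ⟨fun i => (h i).1, (h 0).2⟩, fun h i => ⟨h.1 i, h.2⟩⟩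
  ext T
  simp only [interFam, Finset.coe_image, Set.mem_image, Set.mem_ofPred_eq]
  constructor
  · rintro ⟨f, hf, rfl⟩
    choose A hA hAS using hf
    refine ⟨_, ⟨A, hA, rfl⟩, ?_⟩
    rw [← inf_inter]
    simp only [hAS]
  · rintro ⟨_, ⟨A, hA, rfl⟩, rfl⟩
    exact ⟨fun i => A i ∩ S, fun i => ⟨A i, hA i, rfl⟩, (inf_inter A).symm⟩

def sumCoords : (Fin n → K) →ₗ[K] K := ∑ i, LinearMap.proj i

lemma sumCoords_apply (v : Fin n → K) : sumCoords v = ∑ i, v i := by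
  simp [sumCoords]

lemma kWiseDiv_iff_span_le_ker (k p : ℕ) (𝓕 : Finset (Finset (Fin n))) :
    kWiseDiv n k p 𝓕 ↔ Submodule.span (ZMod p)
      (charVec (ZMod p) '' interFam (𝓕 : Set (Finset (Fin n))) k) ≤ LinearMap.ker sumCoords := by
  have charVec_mem_ker (T : Finset (Fin n)) :
      charVec (ZMod p) T ∈ LinearMap.ker sumCoords ↔ p ∣ T.card := by
    rw [LinearMap.mem_ker, sumCoords_apply, sum_charVec, ZMod.natCast_eq_zero_iff]
  rw [Submodule.span_le, Set.image_subset_iff]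
  constructor
  · rintro h _ ⟨A, hA, rfl⟩
    exact (charVec_mem_ker _).2 (h A hA)
  · exact fun h A hA => (charVec_mem_ker _).1 (h ⟨A, hA, rfl⟩)

lemma apply_eq_zero_of_notMem_suppS {C : Submodule K (Fin n → K)} {v : Fin n → K} (hv : v ∈ C)
    {i : Fin n} (hi : i ∉ suppS C) : v i = 0 :=
  not_not.1 fun h => hi ⟨v, hv, h⟩

lemma restrTo_sup_le {C D : Submodule K (Fin n → K)} {S : Set (Fin n)} (hC : suppS C ⊆ S)
    (hD : Disjoint (suppS D) S) : restrTo S (C ⊔ D) ≤ C := by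
  rintro _ ⟨v, hv, rfl⟩
  obtain ⟨c, hc, d, hd, rfl⟩ := Submodule.mem_sup.1 hv
  convert hc using 1
  funext i
  by_cases hi : i ∈ S
  · have : d i = 0 := apply_eq_zero_of_notMem_suppS hd (hD.notMem_of_mem_right hi)
    simp [indicatorMapL, hi, this]
  · have : c i = 0 := apply_eq_zero_of_notMem_suppS hc (fun h => hi (hC h))
    simp [indicatorMapL, hi, this]

theorem kWiseDiv_image_inter {p k : ℕ} (hk : 0 < k) {𝓕 : Finset (Finset (Fin n))}
    (hdiv : kWiseDiv n k p 𝓕) {C D : Submodule (ZMod p) (Fin n → ZMod p)}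
    (hdec : schurPow (Submodule.span (ZMod p) (charVec (ZMod p) '' (𝓕 : Set (Finset (Fin n)))))
      (k - 1) = C ⊔ D)
    {S : Finset (Fin n)} (hC : suppS C ⊆ S) (hD : Disjoint (suppS D) S) :
    kWiseDiv n k p (𝓕.image (· ∩ S)) := by
  obtain ⟨r, rfl⟩ : ∃ r, k = r + 1 := Nat.exists_eq_add_one.2 hk
  rw [schurPow_span_charVec, Nat.add_sub_cancel] at hdec
  rw [kWiseDiv_iff_span_le_ker] at hdiv ⊢
  have restrict_generators : Submodule.span (ZMod p)
      (charVec (ZMod p) '' interFam (↑(𝓕.image (· ∩ S)) : Set (Finset (Fin n))) (r + 1)) =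
        restrTo S (Submodule.span (ZMod p)
          (charVec (ZMod p) '' interFam (𝓕 : Set (Finset (Fin n))) (r + 1))) := by
    rw [restrTo, ← Submodule.span_image, interFam_image_inter, Set.image_image, Set.image_image]
    simp only [indicatorMapL_charVec]
  calc _ = restrTo S (C ⊔ D) := by rw [restrict_generators, hdec]
    _ ≤ C := restrTo_sup_le hC hD
    _ ≤ C ⊔ D := le_sup_left
    _ ≤ _ := hdec ▸ hdiv

lemma card_le_card_image_inter_mul {α : Type*} [Fintype α] [DecidableEq α]
    (𝓕 : Finset (Finset α)) {S T : Finset α} (hcover : S ∪ T = Finset.univ) :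
    𝓕.card ≤ (𝓕.image (· ∩ S)).card * (𝓕.image (· ∩ T)).card := by
  rw [← Finset.card_product]
  refine Finset.card_le_card_of_injOn (fun A => (A ∩ S, A ∩ T))
    (fun A hA => Finset.mem_product.2 ⟨Finset.mem_image_of_mem _ hA, Finset.mem_image_of_mem _ hA⟩)
    fun A _ B _ h => ?_
  obtain ⟨hS, hT⟩ := Prod.ext_iff.1 h
  rw [← Finset.inter_univ A, ← Finset.inter_univ B, ← hcover, Finset.inter_union_distrib_left,
    Finset.inter_union_distrib_left]
  exact congrArg₂ (· ∪ ·) hS hT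

theorem statement12_general (p n k : ℕ) (hk : 0 < k)
    (𝓕 : Finset (Finset (Fin n))) (hdiv : kWiseDiv n k p 𝓕)
    (V : Submodule (ZMod p) (Fin n → ZMod p))
    (hV : V = Submodule.span (ZMod p) (charVec (ZMod p) '' (𝓕 : Set (Finset (Fin n)))))
    (C₁ C₂ : Submodule (ZMod p) (Fin n → ZMod p))
    (hdec : schurPow V (k - 1) = C₁ ⊔ C₂)
    (S₁ S₂ : Finset (Fin n)) (hS₁ : suppS C₁ = ↑S₁) (hS₂ : suppS C₂ = ↑S₂)
    (hdisj : Disjoint S₁ S₂) (hcover : S₁ ∪ S₂ = Finset.univ) :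
    kWiseDiv n k p (𝓕.image (· ∩ S₁)) ∧ kWiseDiv n k p (𝓕.image (· ∩ S₂)) ∧
      𝓕.card ≤ (𝓕.image (· ∩ S₁)).card * (𝓕.image (· ∩ S₂)).card := by
  subst hV
  have hdisj' : Disjoint (S₁ : Set (Fin n)) S₂ := Finset.disjoint_coe.2 hdisj
  refine ⟨kWiseDiv_image_inter hk hdiv hdec hS₁.le (hS₂ ▸ hdisj'.symm), ?_,
    card_le_card_image_inter_mul 𝓕 hcover⟩
  exact kWiseDiv_image_inter hk hdiv (hdec.trans (sup_comm _ _)) hS₂.le (hS₁ ▸ hdisj')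

/-- if `V^⟨k⟩ = C₁ ⊕ C₂` with disjoint nonzero supports covering `[n]`,
then the two restricted families are k-wise p-divisible and `|𝓕| ≤ |𝓕₁||𝓕₂|`.
(Recall `schurPow V (k-1) = V^⟨k⟩`.) -/
theorem statement12 (p n k : ℕ) [Fact p.Prime] (hk : 0 < k)
    (𝓕 : Finset (Finset (Fin n))) (hdiv : kWiseDiv n k p 𝓕)
    (V : Submodule (ZMod p) (Fin n → ZMod p))
    (hV : V = Submodule.span (ZMod p) (charVec (ZMod p) '' (𝓕 : Set (Finset (Fin n)))))
    (C₁ C₂ : Submodule (ZMod p) (Fin n → ZMod p)) (hC₁ : C₁ ≠ ⊥) (hC₂ : C₂ ≠ ⊥)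
    (hdec : schurPow V (k - 1) = C₁ ⊔ C₂)
    (S₁ S₂ : Finset (Fin n)) (hS₁ : suppS C₁ = ↑S₁) (hS₂ : suppS C₂ = ↑S₂)
    (hdisj : Disjoint S₁ S₂) (hcover : S₁ ∪ S₂ = Finset.univ) :
    kWiseDiv n k p (𝓕.image (· ∩ S₁)) ∧ kWiseDiv n k p (𝓕.image (· ∩ S₂)) ∧
      𝓕.card ≤ (𝓕.image (· ∩ S₁)).card * (𝓕.image (· ∩ S₂)).card :=
  statement12_general p n k hk 𝓕 hdiv V hV C₁ C₂ hdec S₁ S₂ hS₁ hS₂ hdisj hcover
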